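/- Fix an integer m ≥ 1. The Dowling polynomials D_m(n;q) = Σ_{k=0}^n W_m(n,k)q^k, where W_m(n,k) are the Whitney numbers of the second kind defined by W_m(n,k) = (1+mk)·W_m(n-1,k) + W_m(n-1,k-1) for n ≥ k ≥ 1 with W_m(0,0) = 1 and W_m(n,k) = 0 for k > n or k < 0, are strongly q-log-convex: for all n ≥ m' ≥ 1, the polynomial D_m(m'-1;q)·D_m(n+1;q) − D_m(m';q)·D_m(n;q) has only nonnegative coefficients. -/

import Mathlib

/-!
With `θ = X · d/dX`, the recurrence for the Whitney numbers reads
`D(n+1) = (1 + X) D(n) + m θ D(n)`, so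
`D(s) D(t+1) - D(s+1) D(t) = m (D(s) θD(t) - θD(s) D(t))`, whose `j`-th coefficient is
`∑_{a+b=j} (b - a) W(s,a) W(t,b)`. Pairing `(a,b)` with `(b,a)` shows that this is nonnegative as
soon as `W(s,b) W(t,a) ≤ W(s,a) W(t,b)` for `s ≤ t` and `a ≤ b`. That inequality follows by chaining
adjacent rows, for which it reduces, through the recurrence, to the log-concavity of each row;
log-concavity is in turn propagated from row to row by the recurrence.
-/

open Polynomial

/-- The Whitney numbers of the second kind of the Dowling lattice over a group of
order `m`: `W_m(0,0) = 1`, `W_m(n,k) = 0` for `k > n`, and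
`W_m(n,k) = (1+mk)·W_m(n-1,k) + W_m(n-1,k-1)` for `n ≥ k ≥ 1`. -/
def whitney (m : ℕ) : ℕ → ℕ → ℕ
  | 0, 0 => 1
  | 0, _ + 1 => 0
  | n + 1, 0 => whitney m n 0
  | n + 1, k + 1 => (1 + m * (k + 1)) * whitney m n (k + 1) + whitney m n k

/-- The Dowling polynomial `D_m(n;q) = Σ_{k=0}^n W_m(n,k) q^k`. -/
noncomputable def dowlingPoly (m n : ℕ) : Polynomial ℝ :=
  ∑ k ∈ Finset.range (n + 1), C ((whitney m n k : ℝ)) * X ^ k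

open Finset

section EulerOperator

variable {R : Type*} [CommRing R]

theorem coeff_X_mul_derivative (p : R[X]) (n : ℕ) :
    (X * derivative p).coeff n = n * p.coeff n := by
  cases n with
  | zero => simp
  | succ n => rw [coeff_X_mul, coeff_derivative]; push_cast; ring

theorem coeff_mul_X_mul_derivative_sub (p q : R[X]) (j : ℕ) :
    (p * (X * derivative q) - X * derivative p * q).coeff j
      = ∑ x ∈ antidiagonal j, ((x.2 : R) - x.1) * (p.coeff x.1 * q.coeff x.2) := by
  rw [coeff_sub, coeff_mul, coeff_mul, ← sum_sub_distrib]
  refine sum_congr rfl fun x _ => ?_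
  rw [coeff_X_mul_derivative, coeff_X_mul_derivative]
  ring

variable [LinearOrder R] [IsStrictOrderedRing R]

theorem coeff_mul_X_mul_derivative_sub_nonneg {p q : R[X]}
    (h : ∀ a b, a ≤ b → p.coeff b * q.coeff a ≤ p.coeff a * q.coeff b) (j : ℕ) :
    0 ≤ (p * (X * derivative q) - X * derivative p * q).coeff j := by
  rw [coeff_mul_X_mul_derivative_sub]
  set S := ∑ x ∈ antidiagonal j, ((x.2 : R) - x.1) * (p.coeff x.1 * q.coeff x.2)
  have hswap : S = ∑ x ∈ antidiagonal j, ((x.1 : R) - x.2) * (p.coeff x.2 * q.coeff x.1) := by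
    rw [← Nat.sum_antidiagonal_swap]
    rfl
  have h2S : 0 ≤ S + S := by
    nth_rewrite 2 [hswap]
    rw [← sum_add_distrib]
    refine sum_nonneg fun x _ => ?_
    rcases le_total x.1 x.2 with hx | hx
    · have hx' : (x.1 : R) ≤ x.2 := by exact_mod_cast hx
      nlinarith [h _ _ hx]
    · have hx' : (x.2 : R) ≤ x.1 := by exact_mod_cast hx
      nlinarith [h _ _ hx]
  linarith

end EulerOperator

-- Extending the column index to `ℤ`, with value `0` at negative indices, makes the recurrence
-- hold uniformly in `k`, including at `k = 0`.
def whitneyInt (m : ℕ) : ℕ → ℤ → ℤ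
  | 0, k => if k = 0 then 1 else 0
  | n + 1, k => (1 + m * k) * whitneyInt m n k + whitneyInt m n (k - 1)

section Whitney

variable (m : ℕ)

theorem whitneyInt_succ (n : ℕ) (k : ℤ) :
    whitneyInt m (n + 1) k = (1 + m * k) * whitneyInt m n k + whitneyInt m n (k - 1) := rfl

theorem whitneyInt_eq_zero_of_neg {k : ℤ} (hk : k < 0) (n : ℕ) : whitneyInt m n k = 0 := by
  induction n generalizing k with
  | zero => simp [whitneyInt, hk.ne]
  | succ n ih => rw [whitneyInt_succ, ih hk, ih (by omega), mul_zero, add_zero]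

theorem whitneyInt_eq_zero_of_lt : ∀ {n : ℕ} {k : ℤ}, n < k → whitneyInt m n k = 0
  | 0, k, hk => by simp only [whitneyInt, ite_eq_right_iff]; omega
  | n + 1, k, hk => by
    rw [whitneyInt_succ, whitneyInt_eq_zero_of_lt (by omega), whitneyInt_eq_zero_of_lt (by omega),
      mul_zero, add_zero]

theorem whitneyInt_natCast : ∀ n k : ℕ, whitneyInt m n k = whitney m n k
  | 0, 0 => rfl
  | 0, k + 1 => by simp only [whitneyInt, whitney]; simp; omega
  | n + 1, 0 => by
    have h := whitneyInt_natCast n 0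
    rw [Nat.cast_zero] at h
    rw [Nat.cast_zero, whitneyInt_succ, h, zero_sub, whitneyInt_eq_zero_of_neg m (by norm_num)]
    simp [whitney]
  | n + 1, k + 1 => by
    rw [whitneyInt_succ, Nat.cast_succ, add_sub_cancel_right, ← Nat.cast_succ,
      whitneyInt_natCast n (k + 1), whitneyInt_natCast n k, whitney]
    push_cast
    ring

theorem whitneyInt_nonneg (n : ℕ) (k : ℤ) : 0 ≤ whitneyInt m n k := by
  rcases lt_or_ge k 0 with hk | hk
  · rw [whitneyInt_eq_zero_of_neg m hk]
  · lift k to ℕ using hk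
    rw [whitneyInt_natCast]
    positivity

theorem whitneyInt_pos : ∀ {n : ℕ} {k : ℤ}, 0 ≤ k → k ≤ n → 0 < whitneyInt m n k
  | 0, k, hk, hkn => by simp [whitneyInt, (by omega : k = 0)]
  | n + 1, k, hk, hkn => by
    have hc : 0 < 1 + (m : ℤ) * k := by positivity
    rw [whitneyInt_succ]
    rcases lt_or_eq_of_le (show k ≤ n + 1 by exact_mod_cast hkn) with hlt | rfl
    · nlinarith [whitneyInt_pos hk (show k ≤ n by omega), whitneyInt_nonneg m n (k - 1)]
    · nlinarith [whitneyInt_nonneg m n (n + 1),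
        whitneyInt_pos (show (0 : ℤ) ≤ n + 1 - 1 by omega) (show (n : ℤ) + 1 - 1 ≤ n by omega)]

theorem whitneyInt_mul_succ_le_succ_mul (n : ℕ) :
    ∀ {i j : ℤ}, i ≤ j →
      whitneyInt m n i * whitneyInt m n (j + 1) ≤ whitneyInt m n (i + 1) * whitneyInt m n j := by
  induction n with
  | zero =>
    intro i j hij
    simp only [whitneyInt]
    split_ifs <;> omega
  | succ n ih =>
    intro i j hij
    rcases lt_or_ge i 0 with hi | hi
    · rw [whitneyInt_eq_zero_of_neg m hi, zero_mul]
      exact mul_nonneg (whitneyInt_nonneg m _ _) (whitneyInt_nonneg m _ _)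
    have H1 := ih hij
    have H2 := ih (show i - 1 ≤ j - 1 by omega)
    have H3 := ih (show i - 1 ≤ j by omega)
    have H4 : whitneyInt m n (i - 1) * whitneyInt m n (j + 1) ≤
        whitneyInt m n (i + 1) * whitneyInt m n (j - 1) := by
      rcases eq_or_lt_of_le hij with rfl | hlt
      · rw [mul_comm]
      · exact H3.trans (by simpa using ih (show i ≤ j - 1 by omega))
    simp only [sub_add_cancel] at H2 H3
    have hd : 0 ≤ (m : ℤ) * (j - i) := mul_nonneg (by positivity) (by omega)
    have hmi : 0 ≤ (m : ℤ) * i := mul_nonneg (by positivity) hi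
    have hc : 0 ≤ (1 + (m : ℤ) * i) * (1 + m * (j + 1)) := mul_nonneg (by omega) (by linarith)
    have hc' : 0 ≤ 1 + (m : ℤ) * (i + 1) := by linarith [Int.natCast_nonneg m]
    have hm2 : 0 ≤ (m : ℤ) * (m * (j - i)) * (whitneyInt m n (i + 1) * whitneyInt m n j) :=
      mul_nonneg (mul_nonneg (by positivity) hd)
        (mul_nonneg (whitneyInt_nonneg m _ _) (whitneyInt_nonneg m _ _))
    simp only [whitneyInt_succ, add_sub_cancel_right]
    linear_combination mul_le_mul_of_nonneg_left H1 hc + mul_le_mul_of_nonneg_left H4 hc'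
      + mul_le_mul_of_nonneg_left H3 hd + H2 + hm2

-- This and the next lemma say that the Whitney triangle is TP₂.
theorem whitneyInt_mul_succ_le_mul_succ (n : ℕ) {i l : ℤ} (hil : i ≤ l) :
    whitneyInt m n l * whitneyInt m (n + 1) i ≤ whitneyInt m n i * whitneyInt m (n + 1) l := by
  have hlog := whitneyInt_mul_succ_le_succ_mul m n (show i - 1 ≤ l - 1 by omega)
  simp only [sub_add_cancel] at hlog
  have hd : 0 ≤ (m : ℤ) * (l - i) * (whitneyInt m n i * whitneyInt m n l) :=
    mul_nonneg (mul_nonneg (by positivity) (by omega))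
      (mul_nonneg (whitneyInt_nonneg m _ _) (whitneyInt_nonneg m _ _))
  rw [whitneyInt_succ, whitneyInt_succ]
  linear_combination hlog + hd

theorem whitneyInt_mul_le_mul_of_le {u t : ℕ} (hut : u ≤ t) {i l : ℤ} (hil : i ≤ l) :
    whitneyInt m t i * whitneyInt m u l ≤ whitneyInt m u i * whitneyInt m t l := by
  induction t, hut using Nat.le_induction with
  | base => rw [mul_comm]
  | succ t hut ih =>
    have hRHS := mul_nonneg (whitneyInt_nonneg m u i) (whitneyInt_nonneg m (t + 1) l)
    rcases lt_or_ge i 0 with hi | hi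
    · rwa [whitneyInt_eq_zero_of_neg m hi, zero_mul]
    rcases lt_or_ge (t : ℤ) l with hl | hl
    · rwa [whitneyInt_eq_zero_of_lt m (show (u : ℤ) < l by omega), mul_zero]
    have hpos : 0 < whitneyInt m t i * whitneyInt m t l :=
      mul_pos (whitneyInt_pos m hi (by omega)) (whitneyInt_pos m (by omega) hl)
    refine le_of_mul_le_mul_right ?_ hpos
    calc whitneyInt m (t + 1) i * whitneyInt m u l * (whitneyInt m t i * whitneyInt m t l)
        = (whitneyInt m t i * whitneyInt m u l) * (whitneyInt m t l * whitneyInt m (t + 1) i) := by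
          ring
      _ ≤ (whitneyInt m u i * whitneyInt m t l) * (whitneyInt m t i * whitneyInt m (t + 1) l) :=
          mul_le_mul ih (whitneyInt_mul_succ_le_mul_succ m t hil)
            (mul_nonneg (whitneyInt_nonneg m _ _) (whitneyInt_nonneg m _ _))
            (mul_nonneg (whitneyInt_nonneg m _ _) (whitneyInt_nonneg m _ _))
      _ = whitneyInt m u i * whitneyInt m (t + 1) l * (whitneyInt m t i * whitneyInt m t l) := by
          ring

end Whitney

theorem coeff_dowlingPoly (m n k : ℕ) : (dowlingPoly m n).coeff k = whitneyInt m n k := by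
  simp only [dowlingPoly, finsetSum_coeff, coeff_C_mul_X_pow, sum_ite_eq, mem_range]
  split_ifs with hk
  · rw [whitneyInt_natCast, Int.cast_natCast]
  · rw [whitneyInt_eq_zero_of_lt m (by omega), Int.cast_zero]

theorem dowlingPoly_succ (m n : ℕ) :
    dowlingPoly m (n + 1)
      = (1 + X) * dowlingPoly m n + (m : ℝ[X]) * (X * derivative (dowlingPoly m n)) := by
  ext k
  rw [coeff_add, coeff_natCast_mul, coeff_X_mul_derivative, add_mul, one_mul, coeff_add]
  cases k with
  | zero => simp [coeff_dowlingPoly, whitneyInt_succ, whitneyInt_eq_zero_of_neg]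
  | succ k =>
    simp only [coeff_X_mul, coeff_dowlingPoly, whitneyInt_succ, Nat.cast_succ,
      add_sub_cancel_right]
    push_cast
    ring

theorem dowlingPoly_mul_succ_sub_succ_mul (m s t : ℕ) :
    dowlingPoly m s * dowlingPoly m (t + 1) - dowlingPoly m (s + 1) * dowlingPoly m t
      = (m : ℝ[X]) * (dowlingPoly m s * (X * derivative (dowlingPoly m t))
          - X * derivative (dowlingPoly m s) * dowlingPoly m t) := by
  rw [dowlingPoly_succ, dowlingPoly_succ]
  ring

theorem coeff_dowlingPoly_mul_le_mul (m : ℕ) {s t : ℕ} (hst : s ≤ t) {a b : ℕ} (hab : a ≤ b) :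
    (dowlingPoly m s).coeff b * (dowlingPoly m t).coeff a
      ≤ (dowlingPoly m s).coeff a * (dowlingPoly m t).coeff b := by
  simp only [coeff_dowlingPoly]
  rw [mul_comm]
  exact_mod_cast whitneyInt_mul_le_mul_of_le m hst (by exact_mod_cast hab)

theorem dowlingPoly_strongly_q_log_convex_general (m : ℕ) :
    ∀ m' n : ℕ, 1 ≤ m' → m' ≤ n →
      ∀ i : ℕ,
        0 ≤ (dowlingPoly m (m' - 1) * dowlingPoly m (n + 1)
              - dowlingPoly m m' * dowlingPoly m n).coeff i := by
  intro m' n hm' hn i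
  obtain ⟨s, rfl⟩ : ∃ s, m' = s + 1 := ⟨m' - 1, by omega⟩
  rw [Nat.add_sub_cancel, dowlingPoly_mul_succ_sub_succ_mul, coeff_natCast_mul]
  exact mul_nonneg m.cast_nonneg <| coeff_mul_X_mul_derivative_sub_nonneg
    (fun a b hab => coeff_dowlingPoly_mul_le_mul m (by omega) hab) i

/-- For each fixed `m ≥ 1`, the Dowling polynomials are strongly
`q`-log-convex: for all `n ≥ m' ≥ 1`, the polynomial
`D_m(m'-1;q)·D_m(n+1;q) − D_m(m';q)·D_m(n;q)` has nonnegative coefficients. -/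
theorem dowlingPoly_strongly_q_log_convex (m : ℕ) (hm : 1 ≤ m) :
    ∀ m' n : ℕ, 1 ≤ m' → m' ≤ n →
      ∀ i : ℕ,
        0 ≤ (dowlingPoly m (m' - 1) * dowlingPoly m (n + 1)
              - dowlingPoly m m' * dowlingPoly m n).coeff i :=
  dowlingPoly_strongly_q_log_convex_general m
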